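/- arXiv:2210.04583 — 3 statements merged into one kernel-verified Lean document; each statement's English description precedes it below -/
import Mathlib

section
/- Every twisted conjugation quandle embeds into the conjugation quandle of some group; i.e., for any group G and automorphism φ, there exists a group H and an injective quandle homomorphism Conj(G, φ) → Conj(H). -/
/-!
Adjoin to `G` a generator `t` acting by `t x t⁻¹ = φ⁻¹ x`, i.e. pass to `G ⋊ ℤ`, and send `g ↦ g t`.
Conjugating by `t` then realises `φ`: `(h t)⁻¹ (g t) (h t) = t⁻¹ (h⁻¹ g) t · h t = φ (h⁻¹ g) h · t`.
-/

namespace TwistedConj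

open SemidirectProduct

variable {G : Type*} [Group G] (φ : G ≃* G)

abbrev Extension : Type _ := G ⋊[zpowersHom (MulAut G) φ⁻¹] Multiplicative ℤ

abbrev generator : Extension φ := inr (Multiplicative.ofAdd 1)

def embedding (g : G) : Extension φ := inl g * generator φ

theorem generator_inv_mul_inl_mul_generator (x : G) :
    (generator φ)⁻¹ * inl x * generator φ = inl (φ x) := by
  rw [← map_inv, ← inl_aut_inv]
  simp

theorem embedding_injective : Function.Injective (embedding φ) :=
  fun _ _ h => inl_injective (mul_right_cancel h)

theorem embedding_twistedConj (g h : G) :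
    embedding φ (φ (h⁻¹ * g) * h) = (embedding φ h)⁻¹ * embedding φ g * embedding φ h := by
  simp only [embedding, mul_inv_rev, ← generator_inv_mul_inl_mul_generator, map_mul, map_inv,
    mul_assoc, inv_mul_cancel_left]

end TwistedConj

/-- Every twisted conjugation quandle `Conj(G, φ)` embeds into the conjugation
quandle of some group. -/
theorem twisted_conj_embeddable {G : Type u} [Group G] (φ : G ≃* G) :
    ∃ (H : Type u) (_ : Group H) (f : G → H), Function.Injective f ∧
      ∀ g h : G, f (φ (h⁻¹ * g) * h) = (f h)⁻¹ * f g * f h :=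
  ⟨_, inferInstance, TwistedConj.embedding φ, TwistedConj.embedding_injective φ,
    TwistedConj.embedding_twistedConj φ⟩
end

section
/- Every Alexander quandle embeds into the conjugation quandle of some group: for any abelian group A and automorphism φ, there exists a group H and an injective map f : A → H with f(φ(a) + b − φ(b)) = f(b)⁻¹ f(a) f(b) for all a, b in A. -/
/-!
`Alex(A, φ)` sits inside the holomorph `A ⋊ Aut A` as the coset `A × {φ⁻¹}`: conjugating
`(a, σ)` by `(b, σ)` gives `(σ⁻¹ (a - b) + b, σ)`, which for `σ = φ⁻¹` is `(φ a + b - φ b, φ⁻¹)`.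
-/

universe u

namespace SemidirectProduct

variable {N : Type*} [Group N]

theorem mk_inv_mul_mk_mul_mk (σ : MulAut N) (a b : N) :
    (⟨b, σ⟩ : N ⋊[MonoidHom.id (MulAut N)] MulAut N)⁻¹ * ⟨a, σ⟩ * ⟨b, σ⟩ =
      ⟨σ⁻¹ (b⁻¹ * a) * b, σ⟩ := by
  ext <;> simp [mul_left, inv_left, mul_assoc]

end SemidirectProduct

open SemidirectProduct

/-- Every Alexander quandle `Alex(A, φ)` embeds into the conjugation quandle of
some group. -/
theorem alexander_embeddable {A : Type u} [AddCommGroup A] (φ : A ≃+ A) :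
    ∃ (H : Type u) (_ : Group H) (f : A → H), Function.Injective f ∧
      ∀ a b : A, f (φ a + b - φ b) = (f b)⁻¹ * f a * f b := by
  let σ : MulAut (Multiplicative A) := AddEquiv.toMultiplicative φ.symm
  refine ⟨Multiplicative A ⋊[MonoidHom.id _] MulAut (Multiplicative A), inferInstance,
    fun a => ⟨Multiplicative.ofAdd a, σ⟩, fun a b h => congrArg left h, fun a b => ?_⟩
  rw [mk_inv_mul_mk_mul_mk]
  congr 1
  refine congrArg Multiplicative.ofAdd (?_ : φ a + b - φ b = φ (-b + a) + b)
  rw [map_add, map_neg]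
  abel
end

section
/- For an abelian group A and automorphism φ, the map a ↦ (a, 1) from the Alexander quandle Alex(A, φ) to Conj(A ⋊_φ ℤ) is an injective quandle homomorphism, where A ⋊_φ ℤ has multiplication (a,m)·(b,n) = (φⁿ(a)+b, m+n). -/
/-- The automorphism group of `A` as a multiplicative group (as `AddAut A` was in the older
Mathlib; it is now an additive group). -/
instance addEquivSelfGroupOld {A : Type*} [Add A] : Group (A ≃+ A) where
  mul g h := h.trans g
  one := AddEquiv.refl _
  inv := AddEquiv.symm
  mul_assoc _ _ _ := rfl
  one_mul _ := rfl
  mul_one _ := rfl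
  inv_mul_cancel := AddEquiv.self_trans_symm

/-- The semidirect product `A ⋊_φ ℤ` for an additive abelian group `A`, with
multiplication `(a, m) · (b, n) = (φⁿ(a) + b, m + n)`. -/
def twAddGroup {A : Type*} [AddCommGroup A] (φ : A ≃+ A) : Group (A × ℤ) where
  mul a b := ((φ ^ b.2 : A ≃+ A) a.1 + b.1, a.2 + b.2)
  one := (0, 0)
  inv a := ((φ ^ (-a.2) : A ≃+ A) (-a.1), -a.2)
  div a b := ((φ ^ (-b.2) : A ≃+ A) a.1 + (φ ^ (-b.2) : A ≃+ A) (-b.1), a.2 + -b.2)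
  div_eq_mul_inv _ _ := rfl
  mul_assoc a b c := by
    have key : ∀ (m n : ℤ) (x : A), (φ ^ (m + n) : A ≃+ A) x
        = (φ ^ m : A ≃+ A) ((φ ^ n : A ≃+ A) x) := by
      intro m n x; rw [zpow_add]; rfl
    refine Prod.ext ?_ (add_assoc _ _ _)
    show (φ ^ c.2 : A ≃+ A) ((φ ^ b.2 : A ≃+ A) a.1 + b.1) + c.1
        = (φ ^ (b.2 + c.2) : A ≃+ A) a.1 + ((φ ^ c.2 : A ≃+ A) b.1 + c.1)
    rw [map_add, add_comm b.2 c.2, key, add_assoc]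
  one_mul b := by
    refine Prod.ext ?_ (zero_add _)
    show (φ ^ b.2 : A ≃+ A) 0 + b.1 = b.1
    rw [map_zero, zero_add]
  mul_one a := by
    refine Prod.ext ?_ (add_zero _)
    show (φ ^ (0 : ℤ) : A ≃+ A) a.1 + 0 = a.1
    rw [zpow_zero, add_zero]; rfl
  inv_mul_cancel a := by
    have key : ∀ x : A, (φ ^ a.2 : A ≃+ A) ((φ ^ (-a.2) : A ≃+ A) x) = x := by
      intro x
      have : (φ ^ a.2 : A ≃+ A) * (φ ^ (-a.2) : A ≃+ A) = 1 := by
        rw [← zpow_add, add_neg_cancel, zpow_zero]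
      calc (φ ^ a.2 : A ≃+ A) ((φ ^ (-a.2) : A ≃+ A) x)
          = ((φ ^ a.2 : A ≃+ A) * (φ ^ (-a.2) : A ≃+ A)) x := rfl
        _ = x := by rw [this]; rfl
    refine Prod.ext ?_ (neg_add_cancel _)
    show (φ ^ a.2 : A ≃+ A) ((φ ^ (-a.2) : A ≃+ A) (-a.1)) + a.1 = 0
    rw [key, neg_add_cancel]

namespace twAddGroup

variable {A : Type*} [AddCommGroup A] (φ : A ≃+ A)

theorem mul_apply (g h : A ≃+ A) (x : A) : (g * h) x = g (h x) := rfl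

theorem zpow_apply_zpow_apply (m n : ℤ) (x : A) :
    (φ ^ m) ((φ ^ n) x) = (φ ^ (m + n)) x := by
  rw [zpow_add, mul_apply]

theorem mul_def (x y : A × ℤ) :
    letI := twAddGroup φ
    x * y = ((φ ^ y.2) x.1 + y.1, x.2 + y.2) := rfl

theorem inv_def (x : A × ℤ) :
    letI := twAddGroup φ
    x⁻¹ = ((φ ^ (-x.2)) (-x.1), -x.2) := rfl

theorem inv_mul_mul (a b : A) (m n : ℤ) :
    letI := twAddGroup φ
    ((b, n) : A × ℤ)⁻¹ * (a, m) * (b, n) = ((φ ^ n) a + b - (φ ^ m) b, m) := by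
  simp only [mul_def, inv_def]
  ext
  · simp only [map_add, map_neg, zpow_apply_zpow_apply]
    -- powers of `φ` commute, so `φⁿ φᵐ φ⁻ⁿ = φᵐ`
    rw [show n + (m + -n) = m by omega]
    abel
  · omega

end twAddGroup

/-- The map `a ↦ (a, 1)` is an injective quandle homomorphism from the
Alexander quandle `Alex(A, φ)` into the conjugation quandle of `A ⋊_φ ℤ`. -/
theorem alexander_embeds_in_twAddGroup {A : Type*} [AddCommGroup A]
    (φ : A ≃+ A) :
    letI := twAddGroup φ
    Function.Injective (fun a : A => ((a, 1) : A × ℤ)) ∧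
    ∀ a b : A, ((φ a + b - φ b, 1) : A × ℤ)
        = ((b, 1) : A × ℤ)⁻¹ * (a, 1) * (b, 1) := by
  refine ⟨Prod.mk_left_injective 1, fun a b => ?_⟩
  rw [twAddGroup.inv_mul_mul, zpow_one]
end
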